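/- arXiv:2111.13523 — 2 statements merged into one kernel-verified Lean document; each statement's English description precedes it below -/
import Mathlib

section
/- Let Σ = Σ_1 ∪ ⋯ ∪ Σ_k be a partition of the alphabet into pairwise disjoint nonempty blocks and let L ⊆ Σ* be closed under the associated partial commutation. If u, v ∈ Σ_i* and u ≡_L v, then u and v are Nerode-equivalent with respect to the projection π_{Σ_i}(L), i.e., for all x ∈ Σ_i*: ux ∈ π_{Σ_i}(L) ↔ vx ∈ π_{Σ_i}(L). (Equivalently, [u]_{≡_L} ∩ Σ_i* ⊆ [u]_{≡_{π_{Σ_i}(L)}} ∩ Σ_i*.) -/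
/-- The Nerode right-congruence of a language `L`: `u ≡_L v` iff
for all words `x`, `u ++ x ∈ L ↔ v ++ x ∈ L`. -/
def NerodeEq {α : Type*} (L : Set (List α)) (u v : List α) : Prop :=
  ∀ x : List α, u ++ x ∈ L ↔ v ++ x ∈ L

/-- The Nerode right-congruence as a setoid on words. -/
def nerodeSetoid {α : Type*} (L : Set (List α)) : Setoid (List α) where
  r := NerodeEq L
  iseqv := ⟨fun _ _ => Iff.rfl, fun h x => (h x).symm, fun h1 h2 x => (h1 x).trans (h2 x)⟩

/-- A language is regular iff its Nerode right-congruence has finitely many classes. -/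
def RegularLang {α : Type*} (L : Set (List α)) : Prop :=
  Finite (Quotient (nerodeSetoid L))

/-- The state complexity of `L`: the number of Nerode right-congruence classes. -/
noncomputable def sc {α : Type*} (L : Set (List α)) : ℕ :=
  Nat.card (Quotient (nerodeSetoid L))

/-- A language is commutative if membership only depends on the number of
occurrences of each letter. -/
def CommutativeLang {α : Type*} [DecidableEq α] (L : Set (List α)) : Prop :=
  ∀ u v : List α, (∀ x : α, u.count x = v.count x) → (u ∈ L ↔ v ∈ L)

/-- A (commutative) language has a product-form minimal automaton iff for all words
`u, v`: `u ≡_L v` holds if and only if `x^{|u|_x} ≡_L x^{|v|_x}` for every letter `x`. -/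
def HasProductForm {α : Type*} [DecidableEq α] (L : Set (List α)) : Prop :=
  ∀ u v : List α,
    NerodeEq L u v ↔
      ∀ x : α, NerodeEq L (List.replicate (u.count x) x) (List.replicate (v.count x) x)

/-- With a partition of the alphabet encoded by a coloring `c : α → Fin k`
(block `Σ_i = c⁻¹(i)`), `projC c i w` is the projection `π_{Σ_i}(w)`. -/
def projC {α : Type*} {k : ℕ} (c : α → Fin k) (i : Fin k) (w : List α) : List α :=
  w.filter (fun x => c x = i)

/-- `L` is closed under the partial commutation associated with the partition
encoded by `c : α → Fin k`: letters in distinct blocks commute. -/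
def PartialCommClosed {α : Type*} {k : ℕ} (c : α → Fin k) (L : Set (List α)) : Prop :=
  ∀ x y : α, c x ≠ c y → ∀ u v : List α,
    (u ++ x :: y :: v ∈ L ↔ u ++ y :: x :: v ∈ L)

/-
Closure under partial commutation lets the letters of `Σ_i` in a word `z` be moved to the
front without leaving or entering `L`: `z ∈ L ↔ π_{Σ_i}(z) · r ∈ L`, where `r` is what remains
of `z` outside `Σ_i`. So if `u x = π_{Σ_i}(z)` with `z ∈ L`, then `u x r ∈ L`, hence `v x r ∈ L`
by `u ≡_L v`, and this word projects to `v x`.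
-/

section

variable {α : Type*} {k : ℕ}

theorem projC_append (c : α → Fin k) (i : Fin k) (w w' : List α) :
    projC c i (w ++ w') = projC c i w ++ projC c i w' :=
  List.filter_append ..

theorem projC_eq_self {c : α → Fin k} {i : Fin k} {w : List α} (hw : ∀ a ∈ w, c a = i) :
    projC c i w = w :=
  List.filter_eq_self.mpr fun a ha => decide_eq_true (hw a ha)

theorem projC_filter_ne (c : α → Fin k) (i : Fin k) (w : List α) :
    projC c i (w.filter fun a => c a ≠ i) = [] := by
  simp [projC, List.filter_filter]

namespace PartialCommClosed

variable {c : α → Fin k} {L : Set (List α)}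

theorem mem_iff_move_left (hL : PartialCommClosed c L) {a : α} {p : List α}
    (hp : ∀ b ∈ p, c b ≠ c a) (w q : List α) :
    w ++ p ++ a :: q ∈ L ↔ w ++ a :: (p ++ q) ∈ L := by
  induction p generalizing w with
  | nil => simp
  | cons b p ih =>
    rw [List.forall_mem_cons] at hp
    calc w ++ b :: p ++ a :: q ∈ L ↔ w ++ [b] ++ p ++ a :: q ∈ L := by simp
      _ ↔ w ++ [b] ++ a :: (p ++ q) ∈ L := ih hp.2 _
      _ ↔ w ++ a :: (b :: p ++ q) ∈ L := by simpa using hL b a hp.1 w (p ++ q)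

theorem mem_iff_projC_append (hL : PartialCommClosed c L) (i : Fin k) (w z : List α) :
    w ++ z ∈ L ↔ w ++ (projC c i z ++ z.filter (fun a => c a ≠ i)) ∈ L := by
  induction z generalizing w with
  | nil => simp [projC]
  | cons a z ih =>
    have step : w ++ a :: z ∈ L ↔
        w ++ a :: (projC c i z ++ z.filter (fun a => c a ≠ i)) ∈ L := by
      simpa using ih (w ++ [a])
    by_cases ha : c a = i
    · simpa [projC, ha] using step
    · have hp : ∀ b ∈ projC c i z, c b ≠ c a := fun b hb =>
        (of_decide_eq_true (List.mem_filter.mp hb).2).trans_ne (Ne.symm ha)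
      rw [step, ← hL.mem_iff_move_left hp]
      simp [projC, ha]

theorem mem_image_projC_of_nerodeEq (hL : PartialCommClosed c L) {i : Fin k} {u v x : List α}
    (hv : ∀ a ∈ v, c a = i) (hx : ∀ a ∈ x, c a = i) (huv : NerodeEq L u v)
    (hux : u ++ x ∈ projC c i '' L) : v ++ x ∈ projC c i '' L := by
  obtain ⟨z, hz, hzux⟩ := hux
  have hur : u ++ (x ++ z.filter fun a => c a ≠ i) ∈ L := by
    simpa [hzux] using (hL.mem_iff_projC_append i [] z).mp hz
  refine ⟨_, (huv _).mp hur, ?_⟩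
  rw [projC_append, projC_append, projC_eq_self hv, projC_eq_self hx, projC_filter_ne,
    List.append_nil]

end PartialCommClosed

end

theorem stmt15_general {α : Type*} {k : ℕ} (c : α → Fin k)
    (L : Set (List α)) (hL : PartialCommClosed c L) (i : Fin k) (u v : List α)
    (hu : ∀ x ∈ u, c x = i) (hv : ∀ x ∈ v, c x = i) (huv : NerodeEq L u v) :
    ∀ x : List α, (∀ y ∈ x, c y = i) →
      (u ++ x ∈ projC c i '' L ↔ v ++ x ∈ projC c i '' L) := fun _ hx =>
  ⟨hL.mem_image_projC_of_nerodeEq hv hx huv,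
    hL.mem_image_projC_of_nerodeEq hu hx fun y => (huv y).symm⟩

/-- If `L` is closed under the partial commutation associated with the partition
`Σ = Σ_1 ∪ ⋯ ∪ Σ_k`, `u, v ∈ Σ_i*` and `u ≡_L v`, then `u` and `v` are
Nerode-equivalent for `π_{Σ_i}(L)` over the alphabet `Σ_i`. -/
theorem stmt15 {α : Type*} {k : ℕ} (c : α → Fin k) (hsurj : Function.Surjective c)
    (L : Set (List α)) (hL : PartialCommClosed c L) (i : Fin k) (u v : List α)
    (hu : ∀ x ∈ u, c x = i) (hv : ∀ x ∈ v, c x = i) (huv : NerodeEq L u v) :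
    ∀ x : List α, (∀ y ∈ x, c y = i) →
      (u ++ x ∈ projC c i '' L ↔ v ++ x ∈ projC c i '' L) :=
  stmt15_general c L hL i u v hu hv huv
end

section
/- Let Σ = Σ_1 ∪ ⋯ ∪ Σ_k be a partition of the alphabet into pairwise disjoint nonempty blocks and let L ⊆ Σ* be closed under the associated partial commutation. Then L = π_{Σ_1}(L) ⧢ π_{Σ_2}(L) ⧢ ⋯ ⧢ π_{Σ_k}(L) if and only if for all words u_1, u_2, …, u_k ∈ L the concatenation π_{Σ_1}(u_1)π_{Σ_2}(u_2)⋯π_{Σ_k}(u_k) belongs to L. (This is the statement that the final states of the canonical automaton of L form a Cartesian product.) -/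
/-- `IsShuffleOf u v w` holds iff `w` is an interleaving `x₁y₁x₂y₂⋯xₙyₙ`
with `u = x₁⋯xₙ` and `v = y₁⋯yₙ`. -/
inductive IsShuffleOf {α : Type*} : List α → List α → List α → Prop
  | nil : IsShuffleOf [] [] []
  | left {u v w : List α} {a : α} : IsShuffleOf u v w → IsShuffleOf (a :: u) v (a :: w)
  | right {u v w : List α} {a : α} : IsShuffleOf u v w → IsShuffleOf u (a :: v) (a :: w)

/-- The shuffle of two languages. -/
def shuffleLang {α : Type*} (U V : Set (List α)) : Set (List α) :=
  {w | ∃ u ∈ U, ∃ v ∈ V, IsShuffleOf u v w}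

/-- The iterated shuffle `L₁ ⧢ L₂ ⧢ ⋯ ⧢ Lₙ` of a list of languages
(`{ε}` is the neutral element of the shuffle). -/
def shuffles {α : Type*} (Ls : List (Set (List α))) : Set (List α) :=
  Ls.foldr shuffleLang {[]}

section aux
variable {α : Type*}

lemma isShuffleOf_nil_left : ∀ (v : List α), IsShuffleOf [] v v
  | [] => .nil
  | _ :: v => .right (isShuffleOf_nil_left v)

lemma isShuffleOf_append : ∀ (u v : List α), IsShuffleOf u v (u ++ v)
  | [], v => isShuffleOf_nil_left v
  | _ :: u, v => .left (isShuffleOf_append u v)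

lemma IsShuffleOf.eq_of_nil_left {v w : List α} (h : IsShuffleOf [] v w) : w = v := by
  generalize hu : ([] : List α) = u at h
  induction h with
  | nil => rfl
  | left _ ih => simp at hu
  | right _ ih => simp_all

lemma IsShuffleOf.eq_of_nil_right {u w : List α} (h : IsShuffleOf u [] w) : w = u := by
  generalize hv : ([] : List α) = v at h
  induction h with
  | nil => rfl
  | left _ ih => simp_all
  | right _ ih => simp at hv

lemma IsShuffleOf.filter {u v w : List α} (h : IsShuffleOf u v w) (p : α → Bool) :
    IsShuffleOf (u.filter p) (v.filter p) (w.filter p) := by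
  induction h with
  | nil => exact .nil
  | @left u v w a _ ih =>
      by_cases hp : p a <;> simp [List.filter_cons, hp]
      · exact .left ih
      · exact ih
  | @right u v w a _ ih =>
      by_cases hp : p a <;> simp [List.filter_cons, hp]
      · exact .right ih
      · exact ih

lemma isShuffleOf_filter_not (p : α → Bool) : ∀ (w : List α),
    IsShuffleOf (w.filter p) (w.filter fun a => !p a) w
  | [] => .nil
  | a :: w => by
      by_cases hp : p a <;> simp [List.filter_cons, hp]
      · exact .left (isShuffleOf_filter_not p w)
      · exact .right (isShuffleOf_filter_not p w)

lemma mem_shuffles_cons {U : Set (List α)} {Ls : List (Set (List α))} {w : List α} :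
    w ∈ shuffles (U :: Ls) ↔ ∃ u ∈ U, ∃ v ∈ shuffles Ls, IsShuffleOf u v w := Iff.rfl

lemma shuffles_mono : ∀ {Ls Ms : List (Set (List α))}, List.Forall₂ (· ⊆ ·) Ls Ms →
    shuffles Ls ⊆ shuffles Ms := by
  intro Ls Ms h
  induction h with
  | nil => exact fun _ h => h
  | cons hUV _ ih =>
      rintro w ⟨u, hu, v, hv, hs⟩
      exact ⟨u, hUV hu, v, ih hv, hs⟩

lemma flatten_mem_shuffles {ι : Type*} (g : ι → List α) (F : ι → Set (List α)) :
    ∀ (is : List ι), (∀ i ∈ is, g i ∈ F i) → (is.map g).flatten ∈ shuffles (is.map F)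
  | [], _ => by simp only [List.map_nil, List.flatten_nil, shuffles, List.foldr_nil]; rfl
  | i :: is, h => by
      refine ⟨g i, h i (by simp), (is.map g).flatten,
        flatten_mem_shuffles g F is (fun j hj => h j (by simp [hj])), ?_⟩
      simpa using isShuffleOf_append (g i) (is.map g).flatten

end aux

section col
variable {α : Type*} {k : ℕ} (c : α → Fin k)

lemma IsShuffleOf.mem_or_mem : ∀ {u v w : List α}, IsShuffleOf u v w →
    ∀ {a : α}, a ∈ w → a ∈ u ∨ a ∈ v := by
  intro u v w h
  induction h with
  | nil => intro a ha; simp at ha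
  | left _ ih =>
      intro a ha
      rcases List.mem_cons.1 ha with rfl | h1
      · exact Or.inl (by simp)
      · rcases ih h1 with h2 | h2
        · exact Or.inl (by simp [h2])
        · exact Or.inr h2
  | right _ ih =>
      intro a ha
      rcases List.mem_cons.1 ha with rfl | h1
      · exact Or.inr (by simp)
      · rcases ih h1 with h2 | h2
        · exact Or.inl h2
        · exact Or.inr (by simp [h2])

lemma projC_pure {i : Fin k} {w : List α} {a : α} (h : a ∈ projC c i w) : c a = i := by
  have := (List.mem_filter.1 (show a ∈ w.filter (fun x => decide (c x = i)) from h)).2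
  simpa using this

lemma projC_of_pure {i : Fin k} {w : List α} (h : ∀ a ∈ w, c a = i) : projC c i w = w :=
  List.filter_eq_self.2 fun a ha => by simp [h a ha]

lemma projC_eq_nil {i : Fin k} {w : List α} (h : ∀ a ∈ w, c a ≠ i) : projC c i w = [] :=
  List.filter_eq_nil_iff.2 fun a ha => by simp [h a ha]

/-- membership in an iterated shuffle of pure-color languages forces the projections. -/
lemma shuffles_proj (U : Fin k → Set (List α))
    (hU : ∀ i, ∀ v ∈ U i, ∀ a ∈ v, c a = i) :
    ∀ (is : List (Fin k)), is.Nodup → ∀ w, w ∈ shuffles (is.map U) →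
      (∀ a ∈ w, c a ∈ is) ∧ ∀ i ∈ is, projC c i w ∈ U i := by
  intro is
  induction is with
  | nil =>
      intro _ w hw
      have : w = [] := by simpa [shuffles] using hw
      simp [this]
  | cons i is ih =>
      intro hnd w hw
      obtain ⟨u, hu, v, hv, hs⟩ := hw
      obtain ⟨hnotmem, hnd'⟩ := List.nodup_cons.1 hnd
      obtain ⟨hcv, hproj⟩ := ih hnd' v hv
      have hcu : ∀ a ∈ u, c a = i := hU i u hu
      constructor
      · intro a ha
        rcases hs.mem_or_mem ha with h | h
        · simp [hcu a h]
        · simp [hcv a h]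
      · intro j hj
        rcases List.mem_cons.1 hj with rfl | hjmem
        · have h1 := hs.filter (fun x => decide (c x = j))
          have h2 : List.filter (fun x => decide (c x = j)) u = u :=
            projC_of_pure c hcu
          have h3 : List.filter (fun x => decide (c x = j)) v = [] :=
            projC_eq_nil c fun a ha he => hnotmem (he ▸ hcv a ha)
          rw [h2, h3] at h1
          have h4 := h1.eq_of_nil_right
          rw [projC, h4]; exact hu
        · have h1 := hs.filter (fun x => decide (c x = j))
          have h2 : List.filter (fun x => decide (c x = j)) u = [] :=
            projC_eq_nil c fun a ha he =>
              hnotmem (by rw [← he, hcu a ha] at hjmem; exact hjmem)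
          rw [h2] at h1
          have h4 := h1.eq_of_nil_left
          rw [projC, h4]
          exact hproj j hjmem

/-- a word is a shuffle of its projections onto a nodup covering list of colors -/
lemma mem_shuffles_self :
    ∀ (is : List (Fin k)), is.Nodup → ∀ w : List α, (∀ a ∈ w, c a ∈ is) →
      w ∈ shuffles (is.map fun i => ({projC c i w} : Set (List α))) := by
  intro is
  induction is with
  | nil =>
      intro _ w hw
      have : w = [] := by
        cases w with
        | nil => rfl
        | cons a t => exact absurd (hw a (by simp)) (by simp)
      simp only [this, List.map_nil, shuffles, List.foldr_nil]; rfl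
  | cons i is ih =>
      intro hnd w hw
      obtain ⟨hnotmem, hnd'⟩ := List.nodup_cons.1 hnd
      set v := w.filter (fun a => !decide (c a = i)) with hv
      have hvmem : v ∈ shuffles (is.map fun j => ({projC c j v} : Set (List α))) :=
        ih hnd' v (by
          intro a ha
          have ha' := List.mem_filter.1 ha
          have := hw a ha'.1
          rcases List.mem_cons.1 this with h | h
          · exact absurd (by simpa using h) (by simpa using ha'.2)
          · exact h)
      have hsets : (is.map fun j => ({projC c j v} : Set (List α))) =
          (is.map fun j => ({projC c j w} : Set (List α))) := by
        apply List.map_congr_left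
        intro j hj
        have hji : j ≠ i := fun he => hnotmem (he ▸ hj)
        congr 1
        rw [hv, projC, projC, List.filter_filter]
        apply List.filter_congr
        intro a _
        by_cases h : c a = j <;> simp [h, hji, Ne.symm hji] <;> simp [h ▸ hji]
      rw [hsets] at hvmem
      exact ⟨projC c i w, rfl, v, hvmem, by
        simpa [projC] using isShuffleOf_filter_not (fun a => decide (c a = i)) w⟩

variable {L : Set (List α)} (hL : PartialCommClosed c L)
include hL

/-- move a letter left past letters of different color -/
lemma move_left {a : α} : ∀ (x : List α), (∀ b ∈ x, c b ≠ c a) → ∀ u v : List α,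
    (u ++ (x ++ a :: v) ∈ L ↔ u ++ (a :: (x ++ v)) ∈ L) := by
  intro x
  induction x with
  | nil => simp
  | cons b x ihx =>
      intro hx u v
      have h1 : u ++ (b :: x ++ a :: v) ∈ L ↔ (u ++ [b]) ++ (x ++ a :: v) ∈ L := by
        simp
      rw [h1, ihx (fun b hb => hx b (by simp [hb])) (u ++ [b]) v]
      have h2 : (u ++ [b]) ++ (a :: (x ++ v)) = u ++ b :: a :: (x ++ v) := by simp
      rw [h2, hL b a (hx b (by simp)) u (x ++ v)]
      simp

/-- membership in L depends only on the color projections -/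
lemma proj_eq_mem : ∀ (w w' : List α), (∀ i, projC c i w = projC c i w') →
    ∀ u : List α, (u ++ w ∈ L ↔ u ++ w' ∈ L) := by
  intro w
  induction w with
  | nil =>
      intro w' h u
      have : w' = [] := by
        cases w' with
        | nil => rfl
        | cons a t =>
            have := h (c a)
            rw [projC, projC] at this
            simp [List.filter_cons] at this
      rw [this]
  | cons a t iht =>
      intro w' h u
      have hi : projC c (c a) w' = a :: projC c (c a) t := by
        rw [← h (c a), projC, List.filter_cons]
        simp [projC]
      rw [projC] at hi
      obtain ⟨x, y, rfl, hx, -, hy⟩ := List.filter_eq_cons_iff.1 hi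
      have hx' : ∀ b ∈ x, c b ≠ c a := fun b hb => by simpa using hx b hb
      rw [move_left c hL x hx' u y]
      have hiht := iht (x ++ y) ?_ (u ++ [a])
      · simpa using hiht
      · intro j
        simp only [projC] at h ⊢
        by_cases hj : j = c a
        · subst hj
          have hxnil : List.filter (fun b => decide (c b = c a)) x = [] :=
            List.filter_eq_nil_iff.2 (fun b hb => by simpa using hx' b hb)
          rw [List.filter_append, hxnil, List.nil_append]
          simpa [projC] using hy.symm
        · have hne : ¬ (decide (c a = j) = true) := by
            simp only [decide_eq_true_eq]
            exact fun he => hj he.symm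
          have h1 := h j
          rw [List.filter_cons, if_neg hne] at h1
          rw [h1, List.filter_append, List.filter_append, List.filter_cons, if_neg hne]

end col


/-- If `L` is closed under the partial commutation associated with the partition
`Σ = Σ_1 ∪ ⋯ ∪ Σ_k`, then `L = π_{Σ_1}(L) ⧢ ⋯ ⧢ π_{Σ_k}(L)` iff for all
`u_1, …, u_k ∈ L` the word `π_{Σ_1}(u_1)π_{Σ_2}(u_2)⋯π_{Σ_k}(u_k)` belongs to `L`
(i.e. the final states of the canonical automaton form a Cartesian product). -/
theorem stmt17 {α : Type*} {k : ℕ} (c : α → Fin k) (hsurj : Function.Surjective c)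
    (L : Set (List α)) (hL : PartialCommClosed c L) :
    L = shuffles (List.ofFn fun i : Fin k => projC c i '' L) ↔
      ∀ us : Fin k → List α, (∀ i, us i ∈ L) →
        (List.ofFn fun i : Fin k => projC c i (us i)).flatten ∈ L := by
  constructor
  · intro hEq us hus
    rw [hEq, List.ofFn_eq_map, List.ofFn_eq_map]
    exact flatten_mem_shuffles (fun i => projC c i (us i)) (fun i => projC c i '' L)
      (List.finRange k) (fun i _ => ⟨us i, hus i, rfl⟩)
  · intro hRHS
    apply Set.eq_of_subset_of_subset
    · -- L ⊆ shuffles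
      intro w hw
      rw [List.ofFn_eq_map]
      have h1 := mem_shuffles_self c (List.finRange k) (List.nodup_finRange k) w
        (fun a _ => List.mem_finRange _)
      refine shuffles_mono ?_ h1
      rw [List.forall₂_map_right_iff, List.forall₂_map_left_iff]
      refine List.forall₂_same.2 fun i _ => ?_
      rintro v (rfl : v = projC c i w)
      exact ⟨w, hw, rfl⟩
    · -- shuffles ⊆ L
      intro w hw
      rw [List.ofFn_eq_map] at hw
      have hpure : ∀ i : Fin k, ∀ v ∈ projC c i '' L, ∀ a ∈ v, c a = i := by
        rintro i v ⟨u, -, rfl⟩ a ha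
        exact projC_pure c ha
      obtain ⟨-, hproj⟩ := shuffles_proj c (fun i => projC c i '' L) hpure
        (List.finRange k) (List.nodup_finRange k) w hw
      choose us hus hproj' using fun i => hproj i (List.mem_finRange i)
      have hflat := hRHS us hus
      have hkey := proj_eq_mem c hL w
        (List.ofFn fun i : Fin k => projC c i (us i)).flatten ?_ []
      · simpa using hkey.2 hflat
      · intro j
        rw [← hproj' j]
        -- projC c j of the flatten equals projC c j (us j)
        rw [projC, List.ofFn_eq_map]
        have : ∀ is : List (Fin k), is.Nodup → (j ∈ is →
            ((is.map fun i => projC c i (us i)).flatten.filter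
              (fun x => decide (c x = j)) = projC c j (us j))) ∧
            (j ∉ is → ((is.map fun i => projC c i (us i)).flatten.filter
              (fun x => decide (c x = j)) = [])) := by
          intro is
          induction is with
          | nil => simp
          | cons i is ihis =>
              intro hnd
              obtain ⟨hni, hnd'⟩ := List.nodup_cons.1 hnd
              constructor
              · intro hj
                rw [List.map_cons, List.flatten_cons, List.filter_append]
                rcases List.mem_cons.1 hj with rfl | hj'
                · rw [(ihis hnd').2 hni]
                  rw [List.append_nil]
                  exact projC_of_pure c (fun a ha => projC_pure c ha)
                · have hji : j ≠ i := fun he => hni (he ▸ hj')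
                  rw [(ihis hnd').1 hj']
                  rw [List.filter_eq_nil_iff.2 (fun a ha => by
                    simp [projC_pure c ha, Ne.symm hji])]
                  simp
              · intro hj
                rw [List.map_cons, List.flatten_cons, List.filter_append]
                have hji : j ≠ i := fun he => hj (by simp [he])
                rw [(ihis hnd').2 (fun h => hj (by simp [h]))]
                rw [List.filter_eq_nil_iff.2 (fun a ha => by
                  simp [projC_pure c ha, Ne.symm hji])]
                simp
        exact ((this (List.finRange k) (List.nodup_finRange k)).1 (List.mem_finRange j)).symm
end
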